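/- For every integer n ≥ 1, the subgroup Γ₁(tⁿ) has index q^{2(n−1)} in Γ₁(t). -/

import Mathlib

/-!
For k ≥ 1 put H = Γ₀(tᵏ⁺¹) ∩ Γ₁(tᵏ), so that Γ₁(tᵏ⁺¹) ≤ H ≤ Γ₁(tᵏ). The coefficient of tᵏ in the
lower left entry, resp. in the upper left entry minus one, is a surjective homomorphism Γ₁(tᵏ) → 𝔽_q,
resp. H → 𝔽_q, with kernel H, resp. Γ₁(tᵏ⁺¹): it is additive because a product of two multiples of tᵏ
vanishes modulo tᵏ⁺¹, and the lower right entry is controlled through the determinant. Hence each step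
Γ₁(tᵏ⁺¹) ≤ Γ₁(tᵏ) has index q², and the indices multiply along the chain down from Γ₁(t).
-/

open Polynomial Matrix

/-- `Γ₁(𝔫)` as a subgroup of `SL₂(A)`, `A = F[t]`:
matrices congruent to `[[1,*],[0,1]]` mod `𝔫`. -/
def Gamma1SL (F : Type*) [Field F] (𝔫 : Polynomial F) :
    Subgroup (Matrix.SpecialLinearGroup (Fin 2) (Polynomial F)) where
  carrier := {γ | 𝔫 ∣ (γ : Matrix (Fin 2) (Fin 2) (Polynomial F)) 1 0 ∧
    𝔫 ∣ ((γ : Matrix (Fin 2) (Fin 2) (Polynomial F)) 0 0 - 1) ∧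
    𝔫 ∣ ((γ : Matrix (Fin 2) (Fin 2) (Polynomial F)) 1 1 - 1)}
  one_mem' := by simp
  mul_mem' := by
    rintro a b ⟨ha1, ha2, ha3⟩ ⟨hb1, hb2, hb3⟩
    refine ⟨?_, ?_, ?_⟩ <;>
      simp only [Matrix.SpecialLinearGroup.coe_mul, Matrix.mul_apply, Fin.sum_univ_two]
    · exact dvd_add (ha1.mul_right _) (hb1.mul_left _)
    · have heq : (a : Matrix (Fin 2) (Fin 2) (Polynomial F)) 0 0 * b 0 0 +
          a 0 1 * b 1 0 - 1 =
          ((a : Matrix (Fin 2) (Fin 2) (Polynomial F)) 0 0 - 1) * b 0 0 +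
            (b 0 0 - 1) + a 0 1 * b 1 0 := by ring
      rw [heq]
      exact dvd_add (dvd_add (ha2.mul_right _) hb2) (hb1.mul_left _)
    · have heq : (a : Matrix (Fin 2) (Fin 2) (Polynomial F)) 1 0 * b 0 1 +
          a 1 1 * b 1 1 - 1 =
          a 1 0 * b 0 1 + ((a : Matrix (Fin 2) (Fin 2) (Polynomial F)) 1 1 - 1) * b 1 1 +
            (b 1 1 - 1) := by ring
      rw [heq]
      exact dvd_add (dvd_add (ha1.mul_right _) (ha3.mul_right _)) hb3
  inv_mem' := by
    rintro a ⟨ha1, ha2, ha3⟩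
    refine ⟨?_, ?_, ?_⟩ <;>
      simp only [Matrix.SpecialLinearGroup.coe_inv, Matrix.adjugate_fin_two,
        Matrix.cons_val', Matrix.cons_val_zero, Matrix.cons_val_one, Matrix.head_cons,
        Matrix.empty_val', Matrix.cons_val_fin_one, Matrix.head_fin_const, Matrix.of_apply]
    · exact ha1.neg_right
    · exact ha3
    · exact ha2

open scoped MatrixGroups

section Coefficients

variable {R : Type*} [CommSemiring R] {a b : R[X]} {i j k : ℕ}

theorem Polynomial.coeff_mul_eq_zero_of_X_pow_dvd (ha : X ^ i ∣ a) (hb : X ^ j ∣ b)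
    (hk : k < i + j) : (a * b).coeff k = 0 :=
  X_pow_dvd_iff.mp (pow_add (X : R[X]) i j ▸ mul_dvd_mul ha hb) k hk

theorem Polynomial.X_pow_succ_dvd_iff_coeff_eq_zero (h : X ^ k ∣ a) :
    X ^ (k + 1) ∣ a ↔ a.coeff k = 0 := by
  rw [X_pow_dvd_iff] at h ⊢
  refine ⟨fun h' => h' k k.lt_succ_self, fun h0 d hd => ?_⟩
  rcases Nat.lt_succ_iff_lt_or_eq.mp hd with hd | rfl
  exacts [h d hd, h0]

end Coefficients

theorem Subgroup.relIndex_eq_card_of_surjective {G M : Type*} [Group G] [Group M]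
    {H K : Subgroup G} (f : K →* M) (hf : Function.Surjective f) (hker : f.ker = H.subgroupOf K) :
    H.relIndex K = Nat.card M := by
  rw [relIndex, ← hker, index_ker, MonoidHom.range_eq_top.mpr hf, card_top]

namespace Matrix.SpecialLinearGroup

variable {R : Type*} [CommRing R] (A B : SL(2, R))

theorem SL2_mul_apply_zero_zero : (A * B) 0 0 = A 0 0 * B 0 0 + A 0 1 * B 1 0 := by
  simp [mul_apply, Fin.sum_univ_two]

theorem SL2_mul_apply_one_zero : (A * B) 1 0 = A 1 0 * B 0 0 + A 1 1 * B 1 0 := by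
  simp [mul_apply, Fin.sum_univ_two]

theorem SL2_inv_apply_one_zero : A⁻¹ 1 0 = -A 1 0 := by
  simp [adjugate_fin_two]

theorem SL2_dvd_apply_one_one_sub_one {𝔫 : R} (h₁ : 𝔫 ∣ A 1 0) (h₂ : 𝔫 ∣ A 0 0 - 1) :
    𝔫 ∣ A 1 1 - 1 := by
  have hdet : A 0 0 * A 1 1 - A 0 1 * A 1 0 = 1 := by
    rw [← det_fin_two]
    exact A.det_coe
  have : A 1 1 - 1 = A 0 1 * A 1 0 - (A 0 0 - 1) * A 1 1 := by linear_combination hdet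
  rw [this]
  exact dvd_sub (h₁.mul_left _) (h₂.mul_right _)

end Matrix.SpecialLinearGroup

open SpecialLinearGroup

def Gamma0SL (R : Type*) [CommRing R] (𝔫 : R) : Subgroup SL(2, R) where
  carrier := {γ | 𝔫 ∣ γ 1 0}
  one_mem' := by simp
  mul_mem' {a b} ha hb := by
    change 𝔫 ∣ (a * b) 1 0
    rw [SL2_mul_apply_one_zero]
    exact dvd_add (ha.mul_right _) (hb.mul_left _)
  inv_mem' {a} ha := by
    change 𝔫 ∣ a⁻¹ 1 0
    rw [SL2_inv_apply_one_zero]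
    exact ha.neg_right

theorem mem_Gamma0SL {R : Type*} [CommRing R] {𝔫 : R} {γ : SL(2, R)} :
    γ ∈ Gamma0SL R 𝔫 ↔ 𝔫 ∣ γ 1 0 :=
  Iff.rfl

section Gamma1

variable {F : Type*} [Field F] {k : ℕ}

theorem mem_Gamma1SL {𝔫 : F[X]} {γ : SL(2, F[X])} :
    γ ∈ Gamma1SL F 𝔫 ↔ 𝔫 ∣ γ 1 0 ∧ 𝔫 ∣ γ 0 0 - 1 ∧ 𝔫 ∣ γ 1 1 - 1 :=
  Iff.rfl

theorem Gamma1SL_le_of_dvd {𝔪 𝔫 : F[X]} (h : 𝔪 ∣ 𝔫) : Gamma1SL F 𝔫 ≤ Gamma1SL F 𝔪 :=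
  fun _ ⟨h₁, h₂, h₃⟩ => ⟨h.trans h₁, h.trans h₂, h.trans h₃⟩

variable (F) in
noncomputable def Gamma1SL.lowerLeftCoeff (k : ℕ) (hk : 0 < k) :
    Gamma1SL F (X ^ k) →* Multiplicative F :=
  MonoidHom.mk' (fun γ => .ofAdd (((γ : SL(2, F[X])) 1 0).coeff k)) fun a b => by
    obtain ⟨ha₁, ha₂, ha₃⟩ := a.2
    obtain ⟨hb₁, hb₂, hb₃⟩ := b.2
    have : (a * b : SL(2, F[X])) 1 0 = (a : SL(2, F[X])) 1 0 * ((b : SL(2, F[X])) 0 0 - 1) +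
        ((a : SL(2, F[X])) 1 1 - 1) * (b : SL(2, F[X])) 1 0 +
        (a : SL(2, F[X])) 1 0 + (b : SL(2, F[X])) 1 0 := by
      rw [SL2_mul_apply_one_zero]; ring
    simp only [Subgroup.coe_mul, this, coeff_add, ← ofAdd_add,
      coeff_mul_eq_zero_of_X_pow_dvd ha₁ hb₂ (by omega : k < k + k),
      coeff_mul_eq_zero_of_X_pow_dvd ha₃ hb₁ (by omega : k < k + k), zero_add]

theorem Gamma1SL.ker_lowerLeftCoeff (hk : 0 < k) : (lowerLeftCoeff F k hk).ker =
    (Gamma0SL F[X] (X ^ (k + 1))).subgroupOf (Gamma1SL F (X ^ k)) := by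
  ext γ
  rw [MonoidHom.mem_ker, Subgroup.mem_subgroupOf, mem_Gamma0SL,
    X_pow_succ_dvd_iff_coeff_eq_zero γ.2.1]
  exact ofAdd_eq_one

theorem Gamma1SL.lowerLeftCoeff_surjective (hk : 0 < k) :
    Function.Surjective (lowerLeftCoeff F k hk) := by
  refine Multiplicative.ofAdd.surjective.forall.mpr fun α => ?_
  let u : F[X] := C α * X ^ k
  have hu : X ^ k ∣ u := dvd_mul_left _ _
  let γ : SL(2, F[X]) := ⟨!![1, 0; u, 1], by simp [det_fin_two_of]⟩
  refine ⟨⟨γ, mem_Gamma1SL.mpr ?_⟩, ?_⟩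
  · simp [γ, hu]
  · simp [lowerLeftCoeff, γ, u, coeff_C_mul]

variable (F) in
noncomputable def Gamma1SL.upperLeftCoeff (k : ℕ) (hk : 0 < k) :
    ↥(Gamma0SL F[X] (X ^ (k + 1)) ⊓ Gamma1SL F (X ^ k)) →* Multiplicative F :=
  MonoidHom.mk' (fun γ => .ofAdd (((γ : SL(2, F[X])) 0 0 - 1).coeff k)) fun a b => by
    obtain ⟨ha₀, -, ha₂, -⟩ := a.2
    obtain ⟨hb₀, -, hb₂, -⟩ := b.2
    have : (a * b : SL(2, F[X])) 0 0 - 1 =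
        ((a : SL(2, F[X])) 0 0 - 1) * ((b : SL(2, F[X])) 0 0 - 1) +
        (a : SL(2, F[X])) 0 1 * (b : SL(2, F[X])) 1 0 +
        ((a : SL(2, F[X])) 0 0 - 1) + ((b : SL(2, F[X])) 0 0 - 1) := by
      rw [SL2_mul_apply_zero_zero]; ring
    simp only [Subgroup.coe_mul, this, coeff_add, ← ofAdd_add,
      coeff_mul_eq_zero_of_X_pow_dvd ha₂ hb₂ (by omega : k < k + k),
      X_pow_dvd_iff.mp (hb₀.mul_left _) k k.lt_succ_self, zero_add]

theorem Gamma1SL.ker_upperLeftCoeff (hk : 0 < k) : (upperLeftCoeff F k hk).ker =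
    (Gamma1SL F (X ^ (k + 1))).subgroupOf (Gamma0SL F[X] (X ^ (k + 1)) ⊓ Gamma1SL F (X ^ k)) := by
  ext γ
  obtain ⟨h₀, -, h₂, -⟩ := γ.2
  rw [MonoidHom.mem_ker, Subgroup.mem_subgroupOf, mem_Gamma1SL]
  simp only [upperLeftCoeff, MonoidHom.mk'_apply, ofAdd_eq_one,
    ← X_pow_succ_dvd_iff_coeff_eq_zero h₂]
  exact ⟨fun h => ⟨h₀, h, SL2_dvd_apply_one_one_sub_one _ h₀ h⟩, fun h => h.2.1⟩

theorem Gamma1SL.upperLeftCoeff_surjective (hk : 0 < k) :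
    Function.Surjective (upperLeftCoeff F k hk) := by
  refine Multiplicative.ofAdd.surjective.forall.mpr fun α => ?_
  let u : F[X] := C α * X ^ k
  have hu : X ^ k ∣ u := dvd_mul_left _ _
  have hu₂ : X ^ (k + 1) ∣ u ^ 2 :=
    (pow_dvd_pow X (by omega : k + 1 ≤ k * 2)).trans
      (pow_mul (X : F[X]) k 2 ▸ pow_dvd_pow_of_dvd hu 2)
  let γ : SL(2, F[X]) := ⟨!![1 + u, 1; -u ^ 2, 1 - u], by simp [det_fin_two_of]; ring⟩
  refine ⟨⟨γ, mem_Gamma0SL.mpr ?_, mem_Gamma1SL.mpr ?_⟩, ?_⟩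
  · simp [γ, hu₂]
  · simp [γ, hu, (pow_dvd_pow X k.le_succ).trans hu₂]
  · simp [upperLeftCoeff, γ, u, coeff_C_mul]

theorem relIndex_Gamma0SL_inf_Gamma1SL (hk : 0 < k) :
    (Gamma0SL F[X] (X ^ (k + 1)) ⊓ Gamma1SL F (X ^ k)).relIndex (Gamma1SL F (X ^ k)) =
      Nat.card F := by
  rw [Subgroup.inf_relIndex_right, Subgroup.relIndex_eq_card_of_surjective _
    (Gamma1SL.lowerLeftCoeff_surjective hk) (Gamma1SL.ker_lowerLeftCoeff hk)]
  exact Nat.card_congr Multiplicative.toAdd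

theorem relIndex_Gamma1SL_X_pow_succ_Gamma0SL_inf (hk : 0 < k) :
    (Gamma1SL F (X ^ (k + 1))).relIndex (Gamma0SL F[X] (X ^ (k + 1)) ⊓ Gamma1SL F (X ^ k)) =
      Nat.card F := by
  rw [Subgroup.relIndex_eq_card_of_surjective _
    (Gamma1SL.upperLeftCoeff_surjective hk) (Gamma1SL.ker_upperLeftCoeff hk)]
  exact Nat.card_congr Multiplicative.toAdd

theorem relIndex_Gamma1SL_X_pow_succ (hk : 0 < k) :
    (Gamma1SL F (X ^ (k + 1))).relIndex (Gamma1SL F (X ^ k)) = Nat.card F ^ 2 := by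
  have hle : Gamma1SL F (X ^ (k + 1)) ≤ Gamma0SL F[X] (X ^ (k + 1)) ⊓ Gamma1SL F (X ^ k) :=
    le_inf (fun _ h => h.1) (Gamma1SL_le_of_dvd (pow_dvd_pow X k.le_succ))
  rw [← Subgroup.relIndex_mul_relIndex _ _ _ hle inf_le_right,
    relIndex_Gamma1SL_X_pow_succ_Gamma0SL_inf hk, relIndex_Gamma0SL_inf_Gamma1SL hk, sq]

theorem relIndex_Gamma1SL_X_pow (k : ℕ) :
    (Gamma1SL F (X ^ (k + 1))).relIndex (Gamma1SL F X) = Nat.card F ^ (2 * k) := by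
  induction k with
  | zero => simp [Subgroup.relIndex_self]
  | succ k ih =>
    rw [← Subgroup.relIndex_mul_relIndex _ _ _
        (Gamma1SL_le_of_dvd (pow_dvd_pow X (k + 1).le_succ))
        (Gamma1SL_le_of_dvd (dvd_pow_self X k.succ_ne_zero)),
      relIndex_Gamma1SL_X_pow_succ k.succ_pos, ih, ← pow_add]
    ring

end Gamma1

theorem stmt5_general (F : Type*) [Field F] [Fintype F]
    (n : ℕ) (hn : 1 ≤ n) :
    (Gamma1SL F ((X : Polynomial F) ^ n)).relIndex (Gamma1SL F (X : Polynomial F)) =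
      (Fintype.card F) ^ (2 * (n - 1)) := by
  obtain ⟨k, rfl⟩ := Nat.exists_eq_add_of_le' hn
  simpa [Nat.card_eq_fintype_card] using relIndex_Gamma1SL_X_pow (F := F) k

theorem stmt5 (p : ℕ) (hp : p.Prime) (F : Type*) [Field F] [Fintype F] [CharP F p]
    (n : ℕ) (hn : 1 ≤ n) :
    (Gamma1SL F ((X : Polynomial F) ^ n)).relIndex (Gamma1SL F (X : Polynomial F)) =
      (Fintype.card F) ^ (2 * (n - 1)) :=
  stmt5_general F n hn
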